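/- arXiv:2307.01923 — 3 statements merged into one kernel-verified Lean document; each statement's English description precedes it below -/
import Mathlib

section
/- Let v ∈ {0,1}^n have some coordinate equal to 1, and let v' ∈ ℝ^n satisfy ‖v' − v‖_∞ < 1/(2n). Then the maximum coordinate of S(v') is attained uniquely at index low(v), i.e., maxidx(S(v')) = low(v). -/
/-!
Write `ε = 1/(2n)`. The shift `i/n` separates consecutive indices by `2ε`, and the whole shift
range `[0, (n-1)/n]` has length `1 - 2ε`. Hence, in the unperturbed vector `S v`, an index
`j < k` loses to `k` by at least `2ε` (since `v j ≤ 1 = v k`), and an index `j > k` loses by at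
least `2ε` as well (since `v j = 0` costs a full unit). A perturbation of size `< ε` in each
coordinate cannot close a gap of `2ε`.
-/

lemma add_lt_add_of_abs_sub_lt_of_add_two_mul_le {a b x y s t ε : ℝ}
    (hx : |x - a| < ε) (hy : |y - b| < ε) (h : a + s + 2 * ε ≤ b + t) : x + s < y + t := by
  linarith [(abs_lt.mp hx).2, (abs_lt.mp hy).1]

namespace Fin

variable {n : ℕ}

lemma cast_div_add_one_div_le_of_lt {j k : Fin n} (h : j < k) :
    ((j : ℕ) : ℝ) / n + 1 / n ≤ ((k : ℕ) : ℝ) / n := by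
  have hjk : ((j : ℕ) : ℝ) + 1 ≤ (k : ℕ) := by exact_mod_cast h
  rw [← add_div]
  gcongr

lemma cast_div_add_one_div_le_one (j : Fin n) : ((j : ℕ) : ℝ) / n + 1 / n ≤ 1 := by
  have hj : ((j : ℕ) : ℝ) + 1 ≤ n := by exact_mod_cast j.isLt
  rw [← add_div]
  exact div_le_one_of_le₀ hj (Nat.cast_nonneg n)

end Fin

theorem stmt1_general (n : ℕ) (v : Fin n → ℝ) (v' : Fin n → ℝ)
    (hbin : ∀ i, v i = 0 ∨ v i = 1)
    (k : Fin n) (hk1 : v k = 1) (hkmax : ∀ i : Fin n, k < i → v i = 0)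
    (hclose : ∀ i, |v' i - v i| < 1 / (2 * n)) :
    ∀ j : Fin n, j ≠ k →
      v' j + (j : ℕ) / (n : ℝ) < v' k + (k : ℕ) / (n : ℝ) := by
  intro j hj
  refine add_lt_add_of_abs_sub_lt_of_add_two_mul_le (hclose j) (hclose k) ?_
  rw [show 2 * (1 / (2 * (n : ℝ))) = 1 / n by ring]
  rcases hj.lt_or_gt with hjk | hkj
  · have hvj : v j ≤ 1 := by rcases hbin j with h | h <;> simp [h]
    linarith [Fin.cast_div_add_one_div_le_of_lt hjk]
  · have hk0 : 0 ≤ ((k : ℕ) : ℝ) / n := by positivity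
    linarith [hkmax j hkj, Fin.cast_div_add_one_div_le_one j]

/-- If `v ∈ {0,1}^n` has some coordinate 1, `k = low v`, and
`v' ∈ ℝ^n` satisfies `‖v' - v‖_∞ < 1/(2n)`, then `S v'` attains its maximum
uniquely at index `k`, i.e. `maxidx (S v') = low v`. -/
theorem stmt1 (n : ℕ) (hn : 1 ≤ n) (v : Fin n → ℝ) (v' : Fin n → ℝ)
    (hbin : ∀ i, v i = 0 ∨ v i = 1)
    (k : Fin n) (hk1 : v k = 1) (hkmax : ∀ i : Fin n, k < i → v i = 0)
    (hclose : ∀ i, |v' i - v i| < 1 / (2 * n)) :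
    ∀ j : Fin n, j ≠ k →
      v' j + (j : ℕ) / (n : ℝ) < v' k + (k : ℕ) / (n : ℝ) :=
  stmt1_general n v v' hbin k hk1 hkmax hclose
end

section
/- The proximity bound 1/(2n) in the approximate low-via-maxidx lemma is sharp: for every c > 0 and n ≥ 2, there exist v ∈ {0,1}^n and v' ∈ ℝ^n with ‖v' − v‖_∞ = 1/(2n) + c such that low(v) = 0 but the maximum of S(v') is attained at index n−1 ≠ low(v). -/
/-- Sharpness of the `1/(2n)` proximity bound: for every `c > 0` and
`n ≥ 2` there are `v ∈ {0,1}^n` and `v' ∈ ℝ^n` with `‖v' - v‖_∞ = 1/(2n) + c`,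
`low v = 0`, but the maximum of `S v'` is attained at index `n - 1 ≠ low v`. -/
theorem stmt2 (n : ℕ) (hn : 2 ≤ n) (c : ℝ) (hc : 0 < c) :
    ∃ v v' : Fin n → ℝ,
      (∀ i, v i = 0 ∨ v i = 1) ∧
      -- low v = 0 :
      v ⟨0, by omega⟩ = 1 ∧ (∀ i : Fin n, (⟨0, by omega⟩ : Fin n) < i → v i = 0) ∧
      -- sup-norm distance is exactly 1/(2n) + c :
      (∀ i, |v' i - v i| ≤ 1 / (2 * n) + c) ∧
      (∃ i, |v' i - v i| = 1 / (2 * n) + c) ∧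
      -- maximum of S v' is attained at index n-1 ≠ 0 = low v :
      (∀ j : Fin n, j ≠ ⟨n - 1, by omega⟩ →
        v' j + (j : ℕ) / (n : ℝ) <
          v' ⟨n - 1, by omega⟩ + ((n : ℝ) - 1) / (n : ℝ)) := by
  set d : ℝ := 1 / (2 * n) + c with hd
  have hn0 : (0 : ℝ) < n := by positivity
  have hdpos : 0 < d := by positivity
  clear_value d
  refine ⟨fun i => if i.val = 0 then 1 else 0,
    fun i => if i.val = 0 then 1 - d else if i.val = n - 1 then d else 0,
    ?_, ?_, ?_, ?_, ?_, ?_⟩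
  · intro i; by_cases h : i.val = 0 <;> simp [h]
  · simp
  · intro i hi
    have : i.val ≠ 0 := by
      intro h; exact absurd hi (by simp [Fin.lt_def, h])
    simp [this]
  · intro i
    have hne : n - 1 ≠ 0 := by omega
    by_cases h0 : i.val = 0
    · simp [h0, abs_of_nonpos, hdpos.le]
    · by_cases h1 : i.val = n - 1
      · simp [h0, h1, hne, abs_of_pos hdpos]
      · simp [h0, h1, hdpos.le]
  · exact ⟨⟨0, by omega⟩, by simp [abs_of_nonpos, hdpos.le]⟩
  · intro j hj
    have hjn : j.val ≠ n - 1 := fun h => hj (Fin.ext h)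
    have hne : n - 1 ≠ 0 := by omega
    have key : ((n : ℝ) - 1) / n = 1 - 1 / n := by field_simp
    have h1n : (0:ℝ) < 1 / n := by positivity
    simp only [hne, if_neg hne, if_pos rfl]
    by_cases h0 : j.val = 0
    · simp only [h0]
      norm_num [key]
      have h3 : ((n : ℝ))⁻¹ < 2 * d := by
        rw [hd, mul_add]
        have h4 : 2 * (1 / (2 * (n:ℝ))) = (n:ℝ)⁻¹ := by field_simp
        linarith
      linarith
    · simp only [if_neg h0, if_neg hjn, zero_add]
      have h2 : ((j.val : ℕ) : ℝ) + 2 ≤ (n : ℝ) := by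
        exact_mod_cast (by omega : (j:ℕ) + 2 ≤ n)
      calc ((j.val : ℕ) : ℝ) / n ≤ ((n:ℝ) - 2) / n := by gcongr; linarith
        _ < d + ((n:ℝ) - 1) / n := by
            have key2 : ((n:ℝ) - 2) / n = ((n:ℝ) - 1) / n - 1 / n := by ring
            rw [key2]; linarith
end

section
/- Fix n ≥ 2 and let v ∈ {0,1}^n be nonzero and v' ∈ [0,1]^n satisfy ‖v − v'‖_∞ ≤ ε/(2n) for some 0 ≤ ε < 1. Let x' = T_L(S(v')) where S(w)[i] = w[i] + i/n and T_L(w)[i] = (w[i]+1)/2. Then the ratio c of the largest coordinate of x' to its second largest coordinate satisfies c ≥ 1 + (2 − 2ε)/(6n − 4 + ε). -/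
/-- For `n ≥ 2`, nonzero binary `v`, `v' ∈ [0,1]^n` with
`‖v - v'‖_∞ ≤ ε/(2n)` (`0 ≤ ε < 1`), and `x' = T_L(S(v'))`, the ratio of the
largest coordinate of `x'` (at index `low v`) to any other coordinate is at
least `1 + (2 - 2ε)/(6n - 4 + ε)`; in particular the max/second-max ratio `c`
satisfies this bound. -/
theorem stmt9 (n : ℕ) (hn : 2 ≤ n) (ε : ℝ) (hε0 : 0 ≤ ε) (hε1 : ε < 1)
    (v : Fin n → ℝ) (hbin : ∀ i, v i = 0 ∨ v i = 1)
    (k : Fin n) (hk1 : v k = 1) (hkmax : ∀ i : Fin n, k < i → v i = 0)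
    (v' : Fin n → ℝ) (hv'range : ∀ i, v' i ∈ Set.Icc (0 : ℝ) 1)
    (hclose : ∀ i, |v i - v' i| ≤ ε / (2 * n)) :
    ∀ j : Fin n, j ≠ k →
      ((v' k + (k : ℕ) / (n : ℝ)) + 1) / 2 / (((v' j + (j : ℕ) / (n : ℝ)) + 1) / 2)
        ≥ 1 + (2 - 2 * ε) / (6 * n - 4 + ε) := by
  intro j hj
  have hN : (2:ℝ) ≤ (n:ℝ) := by exact_mod_cast hn
  have hNpos : (0:ℝ) < (n:ℝ) := by linarith
  have hNne : ((n:ℝ)) ≠ 0 := ne_of_gt hNpos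
  have hkn : ((k:ℕ):ℝ) + 1 ≤ (n:ℝ) := by exact_mod_cast Nat.succ_le_of_lt k.isLt
  have hjn : ((j:ℕ):ℝ) + 1 ≤ (n:ℝ) := by exact_mod_cast Nat.succ_le_of_lt j.isLt
  have hk0 : (0:ℝ) ≤ ((k:ℕ):ℝ) := Nat.cast_nonneg _
  have hj0 : (0:ℝ) ≤ ((j:ℕ):ℝ) := Nat.cast_nonneg _
  have hvk : 1 - ε / (2*(n:ℝ)) ≤ v' k := by
    have h := hclose k
    rw [hk1] at h
    have := abs_le.mp h
    linarith [this.1]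
  have hvj1 : v' j ≤ 1 := (hv'range j).2
  have hvj0 : 0 ≤ v' j := (hv'range j).1
  have hD : (0:ℝ) < 6*(n:ℝ) - 4 + ε := by linarith
  set A : ℝ := (v' k + (k:ℕ) / (n:ℝ)) + 1 with hA
  set B : ℝ := (v' j + (j:ℕ) / (n:ℝ)) + 1 with hB
  clear_value A B
  have hBpos : 0 < B := by
    have : 0 ≤ ((j:ℕ):ℝ) / (n:ℝ) := div_nonneg hj0 hNpos.le
    rw [hB]; linarith
  have heps : (n:ℝ) * (1 - ε / (2*(n:ℝ))) = (n:ℝ) - ε/2 := by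
    field_simp
  have hnvk : (n:ℝ) - ε/2 ≤ (n:ℝ) * v' k := by
    have := mul_le_mul_of_nonneg_left hvk hNpos.le
    linarith
  have eqAB : (n:ℝ)*(A-B) = (n:ℝ)*(v' k) - (n:ℝ)*(v' j) + ((k:ℕ):ℝ) - ((j:ℕ):ℝ) := by
    rw [hA, hB]; field_simp; ring
  have eqB : (n:ℝ)*B = (n:ℝ)*(v' j) + ((j:ℕ):ℝ) + (n:ℝ) := by
    rw [hB]; field_simp
  -- key inequality : (2 - 2ε) * B ≤ (A - B) * D
  have key : (2 - 2*ε) * B ≤ (A - B) * (6*(n:ℝ) - 4 + ε) := by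
    have key2 : (n:ℝ) * ((2 - 2*ε) * B) ≤ (n:ℝ) * ((A - B) * (6*(n:ℝ) - 4 + ε)) := by
      rcases lt_or_gt_of_ne hj with hlt | hgt
      · -- j < k
        have hjk : ((j:ℕ):ℝ) + 1 ≤ ((k:ℕ):ℝ) := by
          exact_mod_cast Nat.succ_le_of_lt hlt
        have hnvj1 : (n:ℝ) * v' j ≤ (n:ℝ) := by
          have := mul_le_mul_of_nonneg_left hvj1 hNpos.le
          linarith
        have h1 : 1 - ε/2 ≤ (n:ℝ)*(A-B) := by linarith
        have h2 : (n:ℝ)*B ≤ 3*(n:ℝ) - 2 := by linarith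
        have e1 : (n:ℝ) * ((2 - 2*ε) * B) = (2 - 2*ε) * ((n:ℝ)*B) := by ring
        have e2 : (n:ℝ) * ((A - B) * (6*(n:ℝ) - 4 + ε))
            = ((n:ℝ)*(A-B)) * (6*(n:ℝ) - 4 + ε) := by ring
        rw [e1, e2]
        linarith [mul_le_mul_of_nonneg_left h2 (by linarith : (0:ℝ) ≤ 2 - 2*ε),
          mul_le_mul_of_nonneg_right h1 hD.le,
          mul_nonneg hε0 (by linarith : (0:ℝ) ≤ 3*(n:ℝ) - 1 - ε/2)]
      · -- k < j, so v j = 0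
        have hvj : v' j ≤ ε / (2*(n:ℝ)) := by
          have h := hclose j
          rw [hkmax j hgt] at h
          have := abs_le.mp h
          linarith [this.1]
        have hnvj : (n:ℝ) * v' j ≤ ε/2 := by
          have := mul_le_mul_of_nonneg_left hvj hNpos.le
          have he2 : (n:ℝ) * (ε / (2*(n:ℝ))) = ε/2 := by field_simp
          linarith
        have h1 : 1 - ε ≤ (n:ℝ)*(A-B) := by linarith
        have h2 : (n:ℝ)*B ≤ 2*(n:ℝ) - 1 + ε/2 := by linarith
        have e1 : (n:ℝ) * ((2 - 2*ε) * B) = (2 - 2*ε) * ((n:ℝ)*B) := by ring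
        have e2 : (n:ℝ) * ((A - B) * (6*(n:ℝ) - 4 + ε))
            = ((n:ℝ)*(A-B)) * (6*(n:ℝ) - 4 + ε) := by ring
        rw [e1, e2]
        linarith [mul_le_mul_of_nonneg_left h2 (by linarith : (0:ℝ) ≤ 2 - 2*ε),
          mul_le_mul_of_nonneg_right h1 hD.le,
          mul_nonneg (by linarith : (0:ℝ) ≤ 1 - ε) (by linarith : (0:ℝ) ≤ 2*(n:ℝ) - 2)]
    exact le_of_mul_le_mul_left key2 hNpos
  -- finish
  rw [ge_iff_le, le_div_iff₀ (by positivity : (0:ℝ) < B / 2)]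
  have hδ : (1 + (2 - 2*ε) / (6*(n:ℝ) - 4 + ε)) * (B/2)
      = (B + (2 - 2*ε) * B / (6*(n:ℝ) - 4 + ε)) / 2 := by ring
  rw [hδ]
  have : (2 - 2*ε) * B / (6*(n:ℝ) - 4 + ε) ≤ A - B := by
    rw [div_le_iff₀ hD]; exact key
  linarith
end
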